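/- arXiv:1708.05259 — 8 statements merged into one kernel-verified Lean document; each statement's English description precedes it below -/
import Mathlib

section
/- Let G be a group and R a nontrivial commutative unital ring. The R-linear map from the free R-module with basis the finite subsets of G (i.e. finitely supported functions Finset G → R) to the ring of locally constant functions Y → R, sending the basis element corresponding to a finite subset E ⊆ G to Q_E, is bijective; moreover Q_E · Q_F = Q_{E∪F} for all finite subsets E, F ⊆ G, so this map is an isomorphism of R-algebras when the domain is given the monoid-algebra multiplication of the commutative monoid (Finset G, ∪, ∅). (Since Y is compact, every locally constant function Y → R has compact support.) -/
/-- `Q_E : Y → R` with `Y = ∏_{g ∈ G} {0,1}` (encoded as `G → Bool`),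
`Q_E(x) = ∏_{g ∈ E} x_g`, interpreting `0, 1` as elements of `R`. -/
def Qfun (G R : Type*) [CommRing R] (E : Finset G) : (G → Bool) → R :=
  fun x => ∏ g ∈ E, (if x g then (1 : R) else 0)

lemma qval {G R : Type*} [CommRing R] (E : Finset G) (x : G → Bool) :
    Qfun G R E x = if (∀ g ∈ E, x g = true) then 1 else 0 := by
  unfold Qfun
  split
  · exact Finset.prod_eq_one fun g hg => by rw [‹∀ g ∈ E, x g = true› g hg]; simp
  · next h =>
    push_neg at h
    obtain ⟨g, hg, hxg⟩ := h
    exact Finset.prod_eq_zero hg (by simp [hxg])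

lemma qmul {G R : Type*} [CommRing R] [DecidableEq G] (E F : Finset G) :
    Qfun G R E * Qfun G R F = Qfun G R (E ∪ F) := by
  funext x
  rw [Pi.mul_apply, qval, qval, qval]
  have huv : (∀ g ∈ E ∪ F, x g = true) ↔ (∀ g ∈ E, x g = true) ∧ (∀ g ∈ F, x g = true) := by
    simp [Finset.mem_union, or_imp, forall_and]
  simp only [huv]
  by_cases h1 : ∀ g ∈ E, x g = true <;> by_cases h2 : ∀ g ∈ F, x g = true
  · rw [if_pos h1, if_pos h2, if_pos ⟨h1, h2⟩, one_mul]
  · rw [if_neg h2, mul_zero, if_neg (by tauto)]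
  · rw [if_neg h1, zero_mul, if_neg (by tauto)]
  · rw [if_neg h1, zero_mul, if_neg (by tauto)]

/-- indicator point of a finite set -/
def indp {G : Type*} [DecidableEq G] (S : Finset G) : G → Bool := fun g => decide (g ∈ S)

lemma q_indp {G R : Type*} [CommRing R] [DecidableEq G] (E S : Finset G) :
    Qfun G R E (indp S) = if E ⊆ S then 1 else 0 := by
  rw [qval]
  congr 1
  simp [indp, Finset.subset_iff]

lemma q_lc {G R : Type*} [CommRing R] (E : Finset G) :
    IsLocallyConstant (Qfun G R E) := by
  rw [IsLocallyConstant.iff_exists_open]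
  intro x
  refine ⟨(E : Set G).pi fun g => {x g},
    isOpen_set_pi E.finite_toSet fun _ _ => isOpen_discrete _, by simp [Set.mem_pi], ?_⟩
  intro y hy
  simp only [Set.mem_pi, Set.mem_singleton_iff, Finset.mem_coe] at hy
  exact Finset.prod_congr rfl fun g hg => by rw [hy g hg]

lemma inj_aux {G R : Type*} [CommRing R] [DecidableEq G]
    (c : (Finset G) →₀ R) (hc : Finsupp.linearCombination R (Qfun G R) c = 0) : c = 0 := by
  have key : ∀ S : Finset G, c S = 0 := by
    intro S
    induction S using Finset.strongInduction with
    | _ S IH =>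
      have h0 : (Finsupp.linearCombination R (Qfun G R) c) (indp S) = 0 := by rw [hc]; rfl
      rw [Finsupp.linearCombination_apply, Finsupp.sum] at h0
      rw [Finset.sum_apply] at h0
      have h1 : ∑ E ∈ c.support, c E * (if E ⊆ S then 1 else 0) = 0 := by
        calc ∑ E ∈ c.support, c E * (if E ⊆ S then 1 else 0)
            = ∑ E ∈ c.support, (c E • Qfun G R E) (indp S) :=
              Finset.sum_congr rfl fun E _ => by rw [Pi.smul_apply, smul_eq_mul, q_indp]
          _ = 0 := h0
      have h2 : ∑ E ∈ c.support, c E * (if E ⊆ S then 1 else 0)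
          = c S * (if S ⊆ S then 1 else 0) := by
        refine Finset.sum_eq_single S (fun E hE hne => ?_) (fun hS => ?_)
        · by_cases hsub : E ⊆ S
          · rw [IH E (lt_of_le_of_ne hsub hne), zero_mul]
          · rw [if_neg hsub, mul_zero]
        · rw [Finsupp.notMem_support_iff.mp hS, zero_mul]
      rw [h2, if_pos (subset_refl S), mul_one] at h1
      exact h1
  ext S
  exact key S

lemma delta_sum {G R : Type*} [CommRing R] [DecidableEq G] (A : Finset G) (x : G → Bool) :
    ∑ F ∈ A.powerset, (-1:R)^F.card * Qfun G R F x
      = ∏ g ∈ A, (1 - if x g then (1:R) else 0) := by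
  have h := Finset.prod_add (fun g => -(if x g then (1:R) else 0)) (fun _ => (1:R)) A
  simp only [Finset.prod_const_one, mul_one] at h
  have h2 : ∀ F ∈ A.powerset, (-1:R)^F.card * Qfun G R F x
      = ∏ g ∈ F, -(if x g then (1:R) else 0) := by
    intro F _
    rw [show (∏ g ∈ F, -(if x g then (1:R) else 0))
        = ∏ g ∈ F, ((-1) * (if x g then (1:R) else 0)) from
      Finset.prod_congr rfl fun g _ => by rw [neg_eq_neg_one_mul]]
    rw [Finset.prod_mul_distrib, Finset.prod_const]
    rfl
  calc ∑ F ∈ A.powerset, (-1:R)^F.card * Qfun G R F x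
      = ∏ g ∈ A, (-(if x g then (1:R) else 0) + 1) := by
        rw [h]; exact Finset.sum_congr rfl h2
    _ = ∏ g ∈ A, (1 - if x g then (1:R) else 0) :=
        Finset.prod_congr rfl fun g _ => by ring

/-- The `R`-linear map from the free `R`-module on the finite subsets of `G`
to the functions `Y → R`, sending the basis element at `E` to `Q_E`, is injective with
range exactly the locally constant functions (hence a bijection onto the ring of locally
constant functions `Y → R`); moreover `Q_E · Q_F = Q_{E ∪ F}`. -/
theorem stmt0 (G : Type*) [Group G] [DecidableEq G] (R : Type*) [CommRing R] [Nontrivial R] :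
    Function.Injective (Finsupp.linearCombination R (Qfun G R)) ∧
    Set.range (Finsupp.linearCombination R (Qfun G R)) =
      {f : (G → Bool) → R | IsLocallyConstant f} ∧
    ∀ E F : Finset G, Qfun G R E * Qfun G R F = Qfun G R (E ∪ F) := by
  refine ⟨?_, ?_, fun E F => qmul E F⟩
  · intro a b hab
    have h := inj_aux (a - b) (by rw [map_sub, hab, sub_self])
    exact sub_eq_zero.mp h
  · ext f
    constructor
    · rintro ⟨c, rfl⟩
      simp only [Set.mem_setOf_eq]
      rw [Finsupp.linearCombination_apply, Finsupp.sum]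
      refine Finset.sum_induction _ IsLocallyConstant
        (fun a b ha hb => ha.comp₂ hb (· + ·)) (IsLocallyConstant.const 0) (fun E _ => ?_)
      exact (q_lc E).comp (fun r : R => c E • r)
    · intro hf
      simp only [Set.mem_setOf_eq] at hf
      have h1 : ∀ x : G → Bool, ∃ I : Finset G,
          ∀ y : G → Bool, (∀ g ∈ I, y g = x g) → f y = f x := by
        intro x
        obtain ⟨U, hU, hxU, hconst⟩ := hf.exists_open x
        obtain ⟨I, u, hIu, hsub⟩ := isOpen_pi_iff.mp hU x hxU
        refine ⟨I, fun y hy => hconst y (hsub (Set.mem_pi.mpr fun g hg => ?_))⟩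
        have hgI : g ∈ I := hg
        rw [hy g hgI]
        exact (hIu g hgI).2
      choose I hI using h1
      have opens : ∀ x : G → Bool, IsOpen {y : G → Bool | ∀ g ∈ I x, y g = x g} := by
        intro x
        have he : {y : G → Bool | ∀ g ∈ I x, y g = x g}
            = (↑(I x) : Set G).pi (fun g => {x g}) := by
          ext y; simp [Set.mem_pi]
        rw [he]
        exact isOpen_set_pi (I x).finite_toSet fun _ _ => isOpen_discrete _
      obtain ⟨t, ht⟩ := isCompact_univ.elim_finite_subcover
        (fun x : G → Bool => {y | ∀ g ∈ I x, y g = x g}) opens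
        (fun y _ => Set.mem_iUnion.mpr ⟨y, fun g _ => rfl⟩)
      set T : Finset G := t.biUnion I with hT
      have factor : ∀ y z : G → Bool, (∀ g ∈ T, y g = z g) → f y = f z := by
        intro y z hyz
        obtain ⟨x, hxt, hy⟩ : ∃ x ∈ t, y ∈ {w : G → Bool | ∀ g ∈ I x, w g = x g} := by
          have := ht (Set.mem_univ y)
          simpa using this
        have hy' : ∀ g ∈ I x, y g = x g := hy
        have hz : ∀ g ∈ I x, z g = x g := fun g hg => by
          rw [← hyz g (Finset.mem_biUnion.mpr ⟨x, hxt, hg⟩)]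
          exact hy' g hg
        rw [hI x y hy', hI x z hz]
      refine ⟨∑ S ∈ T.powerset, ∑ F ∈ (T \ S).powerset,
        Finsupp.single (S ∪ F) ((-1:R)^F.card * f (indp S)), ?_⟩
      rw [map_sum]
      funext x
      rw [Finset.sum_apply]
      have hterm : ∀ S ∈ T.powerset,
          (Finsupp.linearCombination R (Qfun G R) (∑ F ∈ (T \ S).powerset,
            Finsupp.single (S ∪ F) ((-1:R)^F.card * f (indp S)))) x
          = f (indp S) * (Qfun G R S x * ∏ g ∈ T \ S, (1 - if x g then (1:R) else 0)) := by
        intro S _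
        rw [map_sum, Finset.sum_apply]
        have e1 : ∀ F ∈ (T \ S).powerset,
            (Finsupp.linearCombination R (Qfun G R)
              (Finsupp.single (S ∪ F) ((-1:R)^F.card * f (indp S)))) x
            = f (indp S) * (Qfun G R S x * ((-1:R)^F.card * Qfun G R F x)) := by
          intro F _
          rw [Finsupp.linearCombination_single, Pi.smul_apply, smul_eq_mul, ← qmul,
            Pi.mul_apply]
          ring
        rw [Finset.sum_congr rfl e1, ← Finset.mul_sum, ← Finset.mul_sum, delta_sum]
      rw [Finset.sum_congr rfl hterm]
      set S0 : Finset G := T.filter (fun g => x g = true) with hS0def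
      have hS0 : S0 ∈ T.powerset := Finset.mem_powerset.mpr (Finset.filter_subset _ _)
      have collapse : ∑ S ∈ T.powerset,
          f (indp S) * (Qfun G R S x * ∏ g ∈ T \ S, (1 - if x g then (1:R) else 0))
          = f (indp S0) * (Qfun G R S0 x * ∏ g ∈ T \ S0, (1 - if x g then (1:R) else 0)) := by
        refine Finset.sum_eq_single_of_mem S0 hS0 (fun S hS hne => ?_)
        by_cases hall : ∀ g ∈ S, x g = true
        · have hsub : S ⊆ S0 := fun g hg =>
            Finset.mem_filter.mpr ⟨Finset.mem_powerset.mp hS hg, hall g hg⟩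
          obtain ⟨g, hgS0, hgS⟩ := Finset.exists_of_ssubset (lt_of_le_of_ne hsub hne)
          have hprod : ∏ g ∈ T \ S, (1 - if x g then (1:R) else 0) = 0 := by
            refine Finset.prod_eq_zero (Finset.mem_sdiff.mpr
              ⟨(Finset.filter_subset _ _) hgS0, hgS⟩) ?_
            rw [if_pos (Finset.mem_filter.mp hgS0).2, sub_self]
          rw [hprod, mul_zero, mul_zero]
        · rw [qval, if_neg hall, zero_mul, mul_zero]
      rw [collapse]
      have hq1 : Qfun G R S0 x = 1 := by
        rw [qval, if_pos (fun g hg => (Finset.mem_filter.mp hg).2)]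
      have hp1 : ∏ g ∈ T \ S0, (1 - if x g then (1:R) else 0) = 1 := by
        refine Finset.prod_eq_one fun g hg => ?_
        obtain ⟨hgT, hgS0⟩ := Finset.mem_sdiff.mp hg
        have : ¬ (x g = true) := fun hx => hgS0 (Finset.mem_filter.mpr ⟨hgT, hx⟩)
        rw [if_neg this, sub_zero]
      rw [hq1, hp1, mul_one, mul_one]
      refine factor (indp S0) x fun g hg => ?_
      by_cases hx : x g = true
      · have : g ∈ S0 := Finset.mem_filter.mpr ⟨hg, hx⟩
        simp [indp, this, hx]
      · have : g ∉ S0 := fun h => hx (Finset.mem_filter.mp h).2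
        simp only [Bool.not_eq_true] at hx
        simp [indp, this, hx]
end

section
/- Let G be a group and R a commutative unital ring. Every locally constant function f : Y → R lies in the R-linear span of the family {Q_E : E a finite subset of G}. -/
lemma q_mul {G R : Type*} [DecidableEq G] [CommRing R] (a : G) (E : Finset G) (x : G → Bool) :
    (if x a then (1 : R) else 0) * Qfun G R E x = Qfun G R (insert a E) x := by
  by_cases hx : x a
  · by_cases ha : a ∈ E
    · simp [Qfun, hx, Finset.insert_eq_self.mpr ha]
    · simp only [Qfun]; rw [Finset.prod_insert ha]
  · rw [if_neg hx, zero_mul]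
    exact (Finset.prod_eq_zero (Finset.mem_insert_self a E) (by simp [hx])).symm

lemma mul_q_mem {G R : Type*} [DecidableEq G] [CommRing R] (a : G) (h : (G → Bool) → R)
    (hh : h ∈ Submodule.span R (Set.range (Qfun G R))) :
    (fun x => (if x a then (1 : R) else 0) * h x) ∈
      Submodule.span R (Set.range (Qfun G R)) := by
  induction hh using Submodule.span_induction with
  | mem p hp =>
    obtain ⟨E, rfl⟩ := hp
    have : (fun x => (if x a then (1 : R) else 0) * Qfun G R E x) = Qfun G R (insert a E) := by
      funext x; exact q_mul a E x
    rw [this]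
    exact Submodule.subset_span ⟨insert a E, rfl⟩
  | zero =>
    have : (fun x => (if x a then (1 : R) else 0) * (0 : (G → Bool) → R) x) = 0 := by
      funext x; simp
    rw [this]; exact Submodule.zero_mem _
  | add p q _ _ hp hq =>
    have : (fun x => (if x a then (1 : R) else 0) * (p + q) x) =
        (fun x => (if x a then (1 : R) else 0) * p x) +
        (fun x => (if x a then (1 : R) else 0) * q x) := by
      funext x; simp [mul_add]
    rw [this]; exact Submodule.add_mem _ hp hq
  | smul c p _ hp =>
    have : (fun x => (if x a then (1 : R) else 0) * (c • p) x) =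
        c • (fun x => (if x a then (1 : R) else 0) * p x) := by
      funext x; simp [mul_left_comm, mul_comm]
    rw [this]; exact Submodule.smul_mem _ _ hp

lemma dep_mem {G R : Type*} [DecidableEq G] [CommRing R] (S : Finset G) :
    ∀ f : (G → Bool) → R, (∀ x y, (∀ g ∈ S, x g = y g) → f x = f y) →
      f ∈ Submodule.span R (Set.range (Qfun G R)) := by
  induction S using Finset.induction_on with
  | empty =>
    intro f hdep
    have : f = (f (fun _ => false)) • Qfun G R ∅ := by
      funext x
      have := hdep x (fun _ => false) (by simp)
      simp [Qfun, this]
    rw [this]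
    exact Submodule.smul_mem _ _ (Submodule.subset_span ⟨∅, rfl⟩)
  | @insert a S ha IH =>

    intro f hdep
    set f1 : (G → Bool) → R := fun x => f (Function.update x a true) with hf1
    set f0 : (G → Bool) → R := fun x => f (Function.update x a false) with hf0
    have hdep' : ∀ b : Bool, ∀ x y : G → Bool, (∀ g ∈ S, x g = y g) →
        f (Function.update x a b) = f (Function.update y a b) := by
      intro b x y hxy
      apply hdep
      intro g hg
      rcases Finset.mem_insert.mp hg with rfl | hg
      · simp
      · have hga : g ≠ a := fun h => ha (h ▸ hg)
        rw [Function.update_of_ne hga, Function.update_of_ne hga]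
        exact hxy g hg
    have h1 : f1 ∈ Submodule.span R (Set.range (Qfun G R)) :=
      IH f1 (fun x y hxy => hdep' true x y hxy)
    have h0 : f0 ∈ Submodule.span R (Set.range (Qfun G R)) :=
      IH f0 (fun x y hxy => hdep' false x y hxy)
    have key : f = (fun x => (if x a then (1 : R) else 0) * f1 x) +
        (f0 - fun x => (if x a then (1 : R) else 0) * f0 x) := by
      funext x
      by_cases hx : x a
      · have hup : Function.update x a true = x := by
          rw [show true = x a from hx.symm]; exact Function.update_eq_self a x
        simp [hf1, hx, hup]
      · have hx' : x a = false := by simpa using hx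
        have hup : Function.update x a false = x := by
          rw [show false = x a from hx'.symm]; exact Function.update_eq_self a x
        simp [hf0, hx, hup]
    rw [key]
    exact Submodule.add_mem _ (mul_q_mem a f1 h1)
      (Submodule.sub_mem _ h0 (mul_q_mem a f0 h0))

/-- Every locally constant function `f : Y → R` lies in the `R`-linear span of the
family `{Q_E : E a finite subset of G}`. -/
theorem stmt2 (G : Type*) [Group G] (R : Type*) [CommRing R]
    (f : (G → Bool) → R) (hf : IsLocallyConstant f) :
    f ∈ Submodule.span R (Set.range (Qfun G R)) := by
  classical
  have key : ∀ y : G → Bool, ∃ I : Finset G,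
      ∀ x : G → Bool, (∀ g ∈ I, x g = y g) → f x = f y := by
    intro y
    have hV : IsOpen (f ⁻¹' {f y}) := hf {f y}
    rcases isOpen_pi_iff.mp hV y rfl with ⟨I, u, hu, hsub⟩
    refine ⟨I, fun x hx => ?_⟩
    have hmem : x ∈ (↑I : Set G).pi u := by
      intro g hg
      rw [hx g (Finset.mem_coe.mp hg)]
      exact (hu g (Finset.mem_coe.mp hg)).2
    simpa using hsub hmem
  choose F hF using key
  have hcov : (Set.univ : Set (G → Bool)) ⊆
      ⋃ y, (↑(F y) : Set G).pi (fun g => {y g}) := by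
    intro x _
    exact Set.mem_iUnion.mpr ⟨x, fun g _ => rfl⟩
  obtain ⟨t, ht⟩ := isCompact_univ.elim_finite_subcover
    (fun y => (↑(F y) : Set G).pi (fun g => {y g}))
    (fun y => isOpen_set_pi (F y).finite_toSet (fun g _ => isOpen_discrete _)) hcov
  apply dep_mem (t.biUnion F)
  intro x x' h
  obtain ⟨y, hy, hx'⟩ := Set.mem_iUnion₂.mp (ht (Set.mem_univ x'))
  have hx'y : ∀ g ∈ F y, x' g = y g := fun g hg => hx' g (Finset.mem_coe.mpr hg)
  have hxy : ∀ g ∈ F y, x g = y g := fun g hg =>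
    (h g (Finset.mem_biUnion.mpr ⟨y, hy, hg⟩)).trans (hx'y g hg)
  rw [hF y x hxy, hF y x' hx'y]
end

section
/- Let G be a group with identity e, g ∈ G, and R a commutative unital ring. The R-linear span of the family {Q_E : E a finite subset of G with e ∈ E and g ∈ E} equals the set of locally constant functions f : Y → R that vanish outside Y_g = {x ∈ Y : x_e = 1 and x_g = 1}. -/
/-- `Y_g = {x ∈ Y : x_e = 1 and x_g = 1}`, where `e = 1` is the identity of `G`. -/
def Yset (G : Type*) [Group G] (g : G) : Set (G → Bool) :=
  {x | x 1 = true ∧ x g = true}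

section Aux

open scoped Classical

variable {G : Type*} {R : Type*} [CommRing R]

lemma qfun_lc (E : Finset G) : IsLocallyConstant (Qfun G R E) := by
  classical
  induction E using Finset.induction_on with
  | empty =>
      have : Qfun G R ∅ = Function.const _ (1 : R) := by funext x; simp [Qfun]
      rw [this]; exact IsLocallyConstant.const 1
  | @insert a s ha ih =>
      have h1 : IsLocallyConstant (fun x : G → Bool => if x a then (1 : R) else 0) := by
        have hcoord : IsLocallyConstant (fun x : G → Bool => x a) :=
          (IsLocallyConstant.iff_continuous _).2 (continuous_apply a)
        exact hcoord.comp (fun b => if b then (1 : R) else 0)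
      have := h1.comp₂ ih (· * ·)
      have heq : Qfun G R (insert a s) =
          fun x => (if x a then (1 : R) else 0) * Qfun G R s x := by
        funext x; simp [Qfun, Finset.prod_insert ha]
      rw [heq]; exact this

lemma exists_finset_of_lc {f : (G → Bool) → R} (hf : IsLocallyConstant f) :
    ∃ S : Finset G, ∀ x y : G → Bool, (∀ s ∈ S, x s = y s) → f x = f y := by
  classical
  have key : ∀ x : G → Bool, ∃ I : Finset G,
      ∀ y : G → Bool, (∀ s ∈ I, y s = x s) → f y = f x := by
    intro x
    have hop : IsOpen (f ⁻¹' {f x}) := hf _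
    rcases isOpen_pi_iff.1 hop x rfl with ⟨I, u, hu, hsub⟩
    refine ⟨I, fun y hy => ?_⟩
    have : y ∈ (I : Set G).pi u := by
      intro a ha
      rw [hy a ha]
      exact (hu a ha).2
    exact hsub this
  choose I hI using key
  have hopen : ∀ x : G → Bool, IsOpen {y : G → Bool | ∀ s ∈ I x, y s = x s} := by
    intro x
    have : {y : G → Bool | ∀ s ∈ I x, y s = x s} =
        ((I x : Set G)).pi (fun s => {x s}) := by
      ext y; simp [Set.mem_pi]
    rw [this]
    exact isOpen_set_pi (I x).finite_toSet (fun a _ => isOpen_discrete _)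
  have hcov : (Set.univ : Set (G → Bool)) ⊆
      ⋃ x : G → Bool, {y | ∀ s ∈ I x, y s = x s} := by
    intro x _
    exact Set.mem_iUnion.2 ⟨x, fun s _ => rfl⟩
  obtain ⟨t, ht⟩ := IsCompact.elim_finite_subcover isCompact_univ _ hopen hcov
  refine ⟨t.biUnion I, fun x y hxy => ?_⟩
  obtain ⟨z, hz, hxz⟩ : ∃ z ∈ t, ∀ s ∈ I z, x s = z s := by
    have := ht (Set.mem_univ x)
    simpa using this
  have hyz : ∀ s ∈ I z, y s = z s := fun s hs => by
    rw [← hxy s (Finset.mem_biUnion.2 ⟨z, hz, hs⟩)]; exact hxz s hs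
  rw [hI z x hxz, hI z y hyz]

lemma ind_expand {S T : Finset G} (hTS : T ⊆ S) :
    (fun x : G → Bool => ∏ s ∈ S, if x s = decide (s ∈ T) then (1 : R) else 0)
      = ∑ F ∈ (S \ T).powerset, ((-1 : R) ^ F.card) • Qfun G R (T ∪ F) := by
  classical
  funext x
  have hL : (∏ s ∈ S, if x s = decide (s ∈ T) then (1 : R) else 0)
      = (∏ s ∈ T, if x s = decide (s ∈ T) then (1 : R) else 0) *
        ∏ s ∈ S \ T, (if x s = decide (s ∈ T) then (1 : R) else 0) := by
    rw [← Finset.prod_union Finset.disjoint_sdiff, Finset.union_sdiff_of_subset hTS]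
  rw [hL]
  have hT : ∏ s ∈ T, (if x s = decide (s ∈ T) then (1 : R) else 0)
      = ∏ s ∈ T, (if x s then (1 : R) else 0) :=
    Finset.prod_congr rfl (fun s hs => by simp [hs])
  have hST : ∏ s ∈ S \ T, (if x s = decide (s ∈ T) then (1 : R) else 0)
      = ∏ s ∈ S \ T, ((-1) * (if x s then (1 : R) else 0) + 1) := by
    refine Finset.prod_congr rfl (fun s hs => ?_)
    have hsT : s ∉ T := (Finset.mem_sdiff.1 hs).2
    cases h : x s <;> simp [hsT, h]
  rw [hT, hST, Finset.prod_add, Finset.mul_sum, Finset.sum_apply]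
  refine Finset.sum_congr rfl (fun F hF => ?_)
  have hFsub : F ⊆ S \ T := Finset.mem_powerset.1 hF
  have hdisj : Disjoint T F := Finset.disjoint_left.2
    (fun a haT haF => (Finset.mem_sdiff.1 (hFsub haF)).2 haT)
  rw [Finset.prod_mul_distrib, Finset.prod_const, Finset.prod_const_one, mul_one,
    Pi.smul_apply, smul_eq_mul, Qfun, Finset.prod_union hdisj]
  ring

lemma ind_mem_span [Group G] (g : G) {S T : Finset G} (hTS : T ⊆ S)
    (h1 : (1 : G) ∈ T) (hg : g ∈ T) :
    (fun x : G → Bool => ∏ s ∈ S, if x s = decide (s ∈ T) then (1 : R) else 0) ∈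
      Submodule.span R {f : (G → Bool) → R |
        ∃ E : Finset G, (1 : G) ∈ E ∧ g ∈ E ∧ f = Qfun G R E} := by
  classical
  rw [ind_expand hTS]
  refine Submodule.sum_mem _ (fun F _ => ?_)
  exact Submodule.smul_mem _ _ (Submodule.subset_span
    ⟨T ∪ F, Finset.mem_union_left _ h1, Finset.mem_union_left _ hg, rfl⟩)

end Aux

/-- The `R`-linear span of `{Q_E : E finite, e ∈ E, g ∈ E}` equals the set of locally
constant functions `f : Y → R` vanishing outside `Y_g`. -/
theorem stmt3 (G : Type*) [Group G] (R : Type*) [CommRing R] (g : G) :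
    (Submodule.span R {f : (G → Bool) → R |
        ∃ E : Finset G, (1 : G) ∈ E ∧ g ∈ E ∧ f = Qfun G R E} : Set ((G → Bool) → R)) =
      {f : (G → Bool) → R | IsLocallyConstant f ∧ ∀ x, x ∉ Yset G g → f x = 0} := by
  classical
  apply Set.Subset.antisymm
  · intro f hf
    induction hf using Submodule.span_induction with
    | mem f hmem =>
        obtain ⟨E, h1E, hgE, rfl⟩ := hmem
        refine ⟨qfun_lc E, fun x hx => ?_⟩
        have hx' : x 1 = false ∨ x g = false := by
          simp only [Yset, Set.mem_setOf_eq, not_and_or, Bool.not_eq_true] at hx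
          exact hx
        rcases hx' with h | h
        · exact Finset.prod_eq_zero h1E (by simp [h])
        · exact Finset.prod_eq_zero hgE (by simp [h])
    | zero =>
        refine ⟨?_, fun x _ => rfl⟩
        have : (0 : (G → Bool) → R) = Function.const _ (0 : R) := rfl
        rw [this]; exact IsLocallyConstant.const 0
    | add a b _ _ ha hb =>
        exact ⟨ha.1.comp₂ hb.1 (· + ·), fun x hx => by
          simp [Pi.add_apply, ha.2 x hx, hb.2 x hx]⟩
    | smul r a _ ha =>
        refine ⟨?_, fun x hx => by simp [Pi.smul_apply, ha.2 x hx]⟩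
        have : (r • a : (G → Bool) → R) = (fun y => r • y) ∘ a := rfl
        rw [this]; exact ha.1.comp _
  · rintro f ⟨hlc, hvan⟩
    obtain ⟨S₀, hS₀⟩ := exists_finset_of_lc hlc
    set S : Finset G := insert (1 : G) (insert g S₀) with hSdef
    have hS : ∀ x y : G → Bool, (∀ s ∈ S, x s = y s) → f x = f y :=
      fun x y h => hS₀ x y (fun s hs => h s (by simp [hSdef, hs]))
    have hf_eq : f = ∑ T ∈ S.powerset, f (fun s => decide (s ∈ T)) •
        (fun x : G → Bool => ∏ s ∈ S, if x s = decide (s ∈ T) then (1 : R) else 0) := by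
      funext x
      rw [Finset.sum_apply]
      have hcongr : ∀ T ∈ S.powerset,
          (f (fun s => decide (s ∈ T)) •
            (fun x : G → Bool => ∏ s ∈ S, if x s = decide (s ∈ T) then (1 : R) else 0)) x
          = if T = S.filter (fun s => x s = true) then f x else 0 := by
        intro T hT
        have hTS : T ⊆ S := Finset.mem_powerset.1 hT
        rw [Pi.smul_apply, smul_eq_mul]
        by_cases hTx : T = S.filter (fun s => x s = true)
        · subst hTx
          have hagree : ∀ s ∈ S, decide (s ∈ S.filter (fun s => x s = true)) = x s := by
            intro s hs
            simp [Finset.mem_filter, hs]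
          have hfval : f (fun s => decide (s ∈ S.filter (fun s => x s = true))) = f x :=
            hS _ _ (fun s hs => hagree s hs)
          have hprod : (∏ s ∈ S, if x s = decide (s ∈ S.filter (fun s => x s = true))
              then (1 : R) else 0) = 1 := by
            refine Finset.prod_eq_one (fun s hs => ?_)
            rw [hagree s hs]
            simp
          rw [hprod, mul_one, hfval, if_pos rfl]
        · have : ∃ s ∈ S, x s ≠ decide (s ∈ T) := by
            by_contra h
            push_neg at h
            apply hTx
            ext s
            simp only [Finset.mem_filter]
            constructor
            · intro hsT
              refine ⟨hTS hsT, ?_⟩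
              rw [h s (hTS hsT)]; simp [hsT]
            · rintro ⟨hsS, hxs⟩
              have := h s hsS
              rw [hxs] at this
              exact of_decide_eq_true this.symm
          obtain ⟨s, hs, hne⟩ := this
          have hprod : (∏ s ∈ S, if x s = decide (s ∈ T) then (1 : R) else 0) = 0 :=
            Finset.prod_eq_zero hs (by simp [hne])
          rw [hprod, mul_zero, if_neg hTx]
      rw [Finset.sum_congr rfl hcongr, Finset.sum_ite_eq' S.powerset]
      have hmem : S.filter (fun s => x s = true) ∈ S.powerset :=
        Finset.mem_powerset.2 (Finset.filter_subset _ _)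
      simp [hmem]
    rw [hf_eq]
    refine Submodule.sum_mem _ (fun T hT => ?_)
    by_cases h0 : f (fun s => decide (s ∈ T)) = 0
    · rw [h0, zero_smul]; exact Submodule.zero_mem _
    · have hx : (fun s => decide (s ∈ T)) ∈ Yset G g := by
        by_contra h
        exact h0 (hvan _ h)
      obtain ⟨h1, h2⟩ := hx
      have h1T : (1 : G) ∈ T := of_decide_eq_true h1
      have hgT : g ∈ T := of_decide_eq_true h2
      exact Submodule.smul_mem _ _
        (ind_mem_span g (Finset.mem_powerset.1 hT) h1T hgT)
end

section
/- Let φ = (φ_g, X_g, X)_{g∈G} be a partial action of a group G on a set X and ψ : G → H a group homomorphism. Then the following are equivalent: (a) for every g in the kernel of ψ, X_g = X_{g⁻¹} and φ_g(x) = x for all x ∈ X_{g⁻¹}; (b) for all g₁, g₂ ∈ G with ψ(g₁) = ψ(g₂) and all x ∈ X_{g₁⁻¹} ∩ X_{g₂⁻¹}, one has φ_{g₁}(x) = φ_{g₂}(x). -/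
/-- A partial action `φ = (φ_g, X_g, X)_{g∈G}` of a group `G` on a set `X`:
`dom g` is the subset `X_g ⊆ X` and `act g` encodes the bijection
`φ_g : X_{g⁻¹} → X_g` (as a total map constrained only on `X_{g⁻¹}`), satisfying
(i) `X_e = X` and `φ_e = id`; (ii) `φ_g(X_{g⁻¹} ∩ X_h) = X_g ∩ X_{gh}`;
(iii) `φ_g(φ_h(x)) = φ_{gh}(x)` for `x ∈ X_{h⁻¹} ∩ X_{h⁻¹g⁻¹}`;
injectivity on `X_{g⁻¹}` makes each `φ_g : X_{g⁻¹} → X_g` a bijection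
(surjectivity onto `X_g` follows from (i) and (ii)). -/
structure PartialAction (G : Type*) (X : Type*) [Group G] where
  dom : G → Set X
  act : G → X → X
  dom_one : dom 1 = Set.univ
  act_one : ∀ x : X, act 1 x = x
  injOn : ∀ g : G, Set.InjOn (act g) (dom g⁻¹)
  image_inter : ∀ g h : G, act g '' (dom g⁻¹ ∩ dom h) = dom g ∩ dom (g * h)
  act_comp : ∀ g h : G, ∀ x ∈ dom h⁻¹ ∩ dom (h⁻¹ * g⁻¹), act g (act h x) = act (g * h) x

/-- For a partial action `φ` of `G` on `X` and a group homomorphism `ψ : G → H`, the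
following are equivalent: (a) for every `g ∈ ker ψ`, `X_g = X_{g⁻¹}` and `φ_g = id` on
`X_{g⁻¹}`; (b) whenever `ψ(g₁) = ψ(g₂)`, the maps `φ_{g₁}` and `φ_{g₂}` agree on
`X_{g₁⁻¹} ∩ X_{g₂⁻¹}`. -/
theorem stmt9 {G H X : Type*} [Group G] [Group H] (pa : PartialAction G X) (ψ : G →* H) :
    (∀ g : G, ψ g = 1 → pa.dom g = pa.dom g⁻¹ ∧ ∀ x ∈ pa.dom g⁻¹, pa.act g x = x) ↔
      (∀ g₁ g₂ : G, ψ g₁ = ψ g₂ →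
        ∀ x ∈ pa.dom g₁⁻¹ ∩ pa.dom g₂⁻¹, pa.act g₁ x = pa.act g₂ x) := by
  constructor
  · intro ha g₁ g₂ hψ x hx
    obtain ⟨hx1, hx2⟩ := hx
    have hker : ψ (g₁ * g₂⁻¹) = 1 := by
      simp [map_mul, hψ]
    obtain ⟨_, hid⟩ := ha _ hker
    have hmem : pa.act g₂ x ∈ pa.dom g₂ ∩ pa.dom (g₂ * g₁⁻¹) := by
      rw [← pa.image_inter g₂ g₁⁻¹]
      exact ⟨x, ⟨hx2, hx1⟩, rfl⟩
    have hcomp := pa.act_comp (g₁ * g₂⁻¹) g₂ x (by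
      constructor
      · exact hx2
      · have : g₂⁻¹ * (g₁ * g₂⁻¹)⁻¹ = g₁⁻¹ := by group
        rw [this]; exact hx1)
    have : g₁ * g₂⁻¹ * g₂ = g₁ := by group
    rw [this] at hcomp
    rw [← hcomp]
    apply hid
    have : (g₁ * g₂⁻¹)⁻¹ = g₂ * g₁⁻¹ := by group
    rw [this]
    exact hmem.2
  · intro hb g hg
    have hid : ∀ x ∈ pa.dom g⁻¹, pa.act g x = x := by
      intro x hx
      have := hb g 1 (by simp [hg]) x (by
        constructor
        · exact hx
        · rw [inv_one, pa.dom_one]; trivial)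
      rw [this, pa.act_one]
    refine ⟨?_, hid⟩
    have himg := pa.image_inter g 1
    rw [pa.dom_one, Set.inter_univ, mul_one, Set.inter_self] at himg
    rw [← himg]
    ext y
    constructor
    · rintro ⟨z, hz, rfl⟩
      rw [hid z hz]; exact hz
    · intro hy; exact ⟨y, hy, hid y hy⟩
end

section
/- Let φ = (φ_g, X_g, X)_{g∈G} be a partial action of a group G on a set X and ψ : G → H a group homomorphism such that for every g in the kernel of ψ, X_g = X_{g⁻¹} and φ_g(x) = x for all x ∈ X_{g⁻¹}. If g₁, g₂ ∈ G satisfy ψ(g₁) = ψ(g₂), and x₁ ∈ X_{g₁⁻¹}, x₂ ∈ X_{g₂⁻¹} satisfy φ_{g₁}(x₁) = φ_{g₂}(x₂), then x₁ = x₂. -/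
/-- If for every `g ∈ ker ψ` one has `X_g = X_{g⁻¹}` and `φ_g = id` on `X_{g⁻¹}`, then
`ψ(g₁) = ψ(g₂)`, `x₁ ∈ X_{g₁⁻¹}`, `x₂ ∈ X_{g₂⁻¹}` and `φ_{g₁}(x₁) = φ_{g₂}(x₂)` imply
`x₁ = x₂`. -/
theorem stmt10 {G H X : Type*} [Group G] [Group H] (pa : PartialAction G X) (ψ : G →* H)
    (hker : ∀ g : G, ψ g = 1 → pa.dom g = pa.dom g⁻¹ ∧ ∀ x ∈ pa.dom g⁻¹, pa.act g x = x)
    (g₁ g₂ : G) (hg : ψ g₁ = ψ g₂) (x₁ x₂ : X)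
    (hx₁ : x₁ ∈ pa.dom g₁⁻¹) (hx₂ : x₂ ∈ pa.dom g₂⁻¹)
    (heq : pa.act g₁ x₁ = pa.act g₂ x₂) : x₁ = x₂ := by
  -- membership of act g x in dom g
  have mem_dom : ∀ (g : G) (x : X), x ∈ pa.dom g⁻¹ → pa.act g x ∈ pa.dom g := by
    intro g x hx
    have : pa.act g x ∈ pa.act g '' (pa.dom g⁻¹ ∩ pa.dom 1) :=
      ⟨x, ⟨hx, by simp [pa.dom_one]⟩, rfl⟩
    rw [pa.image_inter] at this
    exact this.1
  -- act g⁻¹ (act g x) = x on dom g⁻¹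
  have inv_act : ∀ (g : G) (x : X), x ∈ pa.dom g⁻¹ → pa.act g⁻¹ (pa.act g x) = x := by
    intro g x hx
    have h := pa.act_comp g⁻¹ g x (by simp [pa.dom_one, hx])
    simpa [pa.act_one] using h
  set y := pa.act g₁ x₁ with hy
  have hy1 : y ∈ pa.dom g₁ := mem_dom g₁ x₁ hx₁
  have hy2 : y ∈ pa.dom g₂ := heq ▸ mem_dom g₂ x₂ hx₂
  -- x₁ ∈ dom (g₁⁻¹ * g₂)
  have hx1' : x₁ ∈ pa.dom (g₁⁻¹ * g₂) := by
    have : pa.act g₁⁻¹ y ∈ pa.act g₁⁻¹ '' (pa.dom g₁⁻¹⁻¹ ∩ pa.dom g₂) :=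
      ⟨y, ⟨by simpa using hy1, hy2⟩, rfl⟩
    rw [pa.image_inter] at this
    rw [hy, inv_act g₁ x₁ hx₁] at this
    exact this.2
  have hk : ψ (g₂⁻¹ * g₁) = 1 := by
    simp [map_mul, map_inv, hg]
  obtain ⟨-, hfix⟩ := hker _ hk
  have hcomp : pa.act g₂⁻¹ (pa.act g₁ x₁) = pa.act (g₂⁻¹ * g₁) x₁ := by
    apply pa.act_comp g₂⁻¹ g₁ x₁
    constructor
    · exact hx₁
    · simpa using hx1'
  have hfix' : pa.act (g₂⁻¹ * g₁) x₁ = x₁ := by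
    apply hfix
    simpa [mul_inv_rev] using hx1'
  calc x₁ = pa.act (g₂⁻¹ * g₁) x₁ := hfix'.symm
    _ = pa.act g₂⁻¹ (pa.act g₁ x₁) := hcomp.symm
    _ = pa.act g₂⁻¹ (pa.act g₂ x₂) := by rw [← hy, heq]
    _ = x₂ := inv_act g₂ x₂ hx₂
end

section
/- Let φ = (φ_g, X_g, X)_{g∈G} be a partial action of a group G on a set X and ψ : G → H a group homomorphism such that for every g in the kernel of ψ, X_g = X_{g⁻¹} and φ_g(x) = x for all x ∈ X_{g⁻¹}. Then for every h ∈ H and every y ∈ ⋃_{g : ψ(g)=h} X_g, there exists exactly one x ∈ X such that there is some g ∈ G with ψ(g) = h, x ∈ X_{g⁻¹} and φ_g(x) = y. -/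
/-- Surjectivity of `φ_g : X_{g⁻¹} → X_g`. -/
lemma PartialAction.surj {G X : Type*} [Group G] (pa : PartialAction G X) (g : G)
    {y : X} (hy : y ∈ pa.dom g) : ∃ x ∈ pa.dom g⁻¹, pa.act g x = y := by
  have := pa.image_inter g 1
  rw [pa.dom_one, Set.inter_univ, mul_one, Set.inter_self] at this
  rw [← this] at hy
  obtain ⟨x, hx, hxy⟩ := hy
  exact ⟨x, hx, hxy⟩

/-- If `φ_g(x) = y` with `x ∈ X_{g⁻¹}`, then `y ∈ X_g`. -/
lemma PartialAction.act_mem {G X : Type*} [Group G] (pa : PartialAction G X) (g : G)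
    {x : X} (hx : x ∈ pa.dom g⁻¹) : pa.act g x ∈ pa.dom g := by
  have := pa.image_inter g 1
  rw [pa.dom_one, Set.inter_univ, mul_one, Set.inter_self] at this
  rw [← this]
  exact ⟨x, hx, rfl⟩

/-- If for every `g ∈ ker ψ` one has `X_g = X_{g⁻¹}` and `φ_g = id` on `X_{g⁻¹}`, then for
every `h ∈ H` and every `y ∈ ⋃_{ψ(g)=h} X_g` there is exactly one `x ∈ X` such that
`φ_g(x) = y` for some `g` with `ψ(g) = h` and `x ∈ X_{g⁻¹}`. -/
theorem stmt11 {G H X : Type*} [Group G] [Group H] (pa : PartialAction G X) (ψ : G →* H)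
    (hker : ∀ g : G, ψ g = 1 → pa.dom g = pa.dom g⁻¹ ∧ ∀ x ∈ pa.dom g⁻¹, pa.act g x = x)
    (h : H) (y : X) (hy : y ∈ ⋃ (g : G) (_ : ψ g = h), pa.dom g) :
    ∃! x : X, ∃ g : G, ψ g = h ∧ x ∈ pa.dom g⁻¹ ∧ pa.act g x = y := by
  simp only [Set.mem_iUnion] at hy
  obtain ⟨g, hg, hyg⟩ := hy
  obtain ⟨x, hx, hxy⟩ := pa.surj g hyg
  refine ⟨x, ⟨g, hg, hx, hxy⟩, ?_⟩
  -- uniqueness: reduce to showing any witness equals act g⁻¹ y in a symmetric way.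
  -- We show: for any (x', g') witness, x' = act (g'⁻¹ * g) x (using kernel hypothesis),
  -- but simpler: show any two witnesses are equal via a common value.
  have key : ∀ x' : X, (∃ g' : G, ψ g' = h ∧ x' ∈ pa.dom g'⁻¹ ∧ pa.act g' x' = y) →
      pa.act g⁻¹ y = x' := by
    rintro x' ⟨g', hg', hx', hxy'⟩
    -- g⁻¹ * g' ∈ ker ψ
    have hk : ψ (g⁻¹ * g') = 1 := by
      rw [map_mul, map_inv, hg, hg', inv_mul_cancel]
    have hyg1 : y ∈ pa.dom g := hyg
    -- y ∈ dom g' ∩ dom g = act g' '' (dom g'⁻¹ ∩ dom (g'⁻¹ * g))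
    have him := pa.image_inter g' (g'⁻¹ * g)
    rw [mul_inv_cancel_left] at him
    have hymem : y ∈ pa.act g' '' (pa.dom g'⁻¹ ∩ pa.dom (g'⁻¹ * g)) := by
      rw [him]
      exact ⟨hxy' ▸ pa.act_mem g' hx', hyg1⟩
    obtain ⟨x'', ⟨hx''1, hx''2⟩, hx''y⟩ := hymem
    have hx'eq : x'' = x' := pa.injOn g' hx''1 hx' (by rw [hx''y, hxy'])
    subst hx'eq
    -- now act g⁻¹ (act g' x'') = act (g⁻¹ * g') x''
    have hcomp := pa.act_comp g⁻¹ g' x'' ⟨hx''1, by rwa [inv_inv]⟩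
    rw [hx''y] at hcomp
    -- kernel: act (g⁻¹ * g') x'' = x''
    obtain ⟨-, hid⟩ := hker (g⁻¹ * g') hk
    rw [hcomp, hid]
    rw [mul_inv_rev, inv_inv]
    exact hx''2
  intro x' hx'
  have h1 := key x' hx'
  have h2 := key x ⟨g, hg, hx, hxy⟩
  rw [← h1, ← h2]
end

section
/- Let φ = (φ_g, X_g, X)_{g∈G} be a partial action of a group G on a set X, V ⊆ X an invariant subset, R a commutative ring, and g, h ∈ G. Suppose a : X → R satisfies {x : a(x) ≠ 0} ⊆ V ∩ X_g and b : X → R satisfies {x : b(x) ≠ 0} ⊆ X_h. Define c : X → R by c(x) = a(x)·b(φ_{g⁻¹}(x)) for x ∈ X_g and c(x) = 0 otherwise. Then {x : c(x) ≠ 0} ⊆ V ∩ X_{gh}. -/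
/-- Let `V ⊆ X` be an invariant subset for a partial action `φ` of `G` on `X`, and let
`a, b : X → R` with `{a ≠ 0} ⊆ V ∩ X_g` and `{b ≠ 0} ⊆ X_h`. If `c : X → R` satisfies
`c(x) = a(x)·b(φ_{g⁻¹}(x))` on `X_g` and `c(x) = 0` off `X_g`, then
`{c ≠ 0} ⊆ V ∩ X_{gh}`. -/
theorem stmt17 {G X : Type*} [Group G] (pa : PartialAction G X) (V : Set X)
    (hV : ∀ g : G, pa.act g '' (V ∩ pa.dom g⁻¹) ⊆ V)
    (R : Type*) [CommRing R] (g h : G) (a b : X → R)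
    (ha : {x | a x ≠ 0} ⊆ V ∩ pa.dom g) (hb : {x | b x ≠ 0} ⊆ pa.dom h)
    (c : X → R)
    (hc1 : ∀ x ∈ pa.dom g, c x = a x * b (pa.act g⁻¹ x))
    (hc2 : ∀ x ∉ pa.dom g, c x = 0) :
    {x | c x ≠ 0} ⊆ V ∩ pa.dom (g * h) := by
  intro x hx
  simp only [Set.mem_setOf_eq] at hx
  by_cases hxg : x ∈ pa.dom g
  · rw [hc1 x hxg] at hx
    have hax : a x ≠ 0 := fun h0 => hx (by rw [h0, zero_mul])
    have hbx : b (pa.act g⁻¹ x) ≠ 0 := fun h0 => hx (by rw [h0, mul_zero])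
    have hV' : x ∈ V := (ha hax).1
    -- y := act g⁻¹ x ∈ dom g⁻¹
    have hy1 : pa.act g⁻¹ x ∈ pa.dom g⁻¹ := by
      have := pa.image_inter g⁻¹ 1
      rw [pa.dom_one, Set.inter_univ, mul_one, Set.inter_self, inv_inv] at this
      rw [← this]
      exact ⟨x, hxg, rfl⟩
    have hy2 : pa.act g⁻¹ x ∈ pa.dom h := hb hbx
    -- act g (act g⁻¹ x) = x
    have hgx : pa.act g (pa.act g⁻¹ x) = x := by
      have := pa.act_comp g g⁻¹ x (by
        simp only [inv_inv, mul_inv_cancel, pa.dom_one]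
        exact ⟨hxg, Set.mem_univ x⟩)
      rw [mul_inv_cancel, pa.act_one] at this
      rw [this]
    have hmem : x ∈ pa.dom g ∩ pa.dom (g * h) := by
      rw [← pa.image_inter g h]
      exact ⟨pa.act g⁻¹ x, ⟨hy1, hy2⟩, hgx⟩
    exact ⟨hV', hmem.2⟩
  · exact absurd (hc2 x hxg) hx
end

section
/- Let X be a Hausdorff topological space whose topology has a basis consisting of compact open sets, and let R be a nontrivial commutative unital ring. If V and V' are open subsets of X such that {f ∈ C_R(X) : supp(f) ⊆ V} = {f ∈ C_R(X) : supp(f) ⊆ V'}, then V = V'. -/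
open Function

lemma aux18 {X : Type*} [TopologicalSpace X] [T2Space X]
    (hbasis : ∀ (x : X) (O : Set X), IsOpen O → x ∈ O →
      ∃ B : Set X, IsCompact B ∧ IsOpen B ∧ x ∈ B ∧ B ⊆ O)
    {R : Type*} [CommRing R] [Nontrivial R]
    {V V' : Set X} (hV : IsOpen V)
    (hsub : {f : X → R | IsLocallyConstant f ∧ IsCompact (support f) ∧ support f ⊆ V} ⊆
        {f : X → R | IsLocallyConstant f ∧ IsCompact (support f) ∧ support f ⊆ V'}) :
    V ⊆ V' := by
  intro x hx
  obtain ⟨B, hBc, hBo, hxB, hBV⟩ := hbasis x V hV hx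
  have hclopen : IsClopen B := ⟨hBc.isClosed, hBo⟩
  set f : X → R := B.indicator (fun _ => 1) with hf
  have hsupp : support f = B := by
    ext y
    by_cases hy : y ∈ B <;> simp [hf, Set.indicator_apply, hy, one_ne_zero]
  have hlc : IsLocallyConstant f := by
    intro s
    by_cases h1 : (1:R) ∈ s <;> by_cases h0 : (0:R) ∈ s
    · have : f ⁻¹' s = Set.univ := by
        ext y; by_cases hy : y ∈ B <;> simp [hf, Set.indicator_apply, hy, h1, h0]
      rw [this]; exact isOpen_univ
    · have : f ⁻¹' s = B := by
        ext y; by_cases hy : y ∈ B <;> simp [hf, Set.indicator_apply, hy, h1, h0]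
      rw [this]; exact hBo
    · have : f ⁻¹' s = Bᶜ := by
        ext y; by_cases hy : y ∈ B <;> simp [hf, Set.indicator_apply, hy, h1, h0]
      rw [this]; exact hclopen.isClosed.isOpen_compl
    · have : f ⁻¹' s = ∅ := by
        ext y; by_cases hy : y ∈ B <;> simp [hf, Set.indicator_apply, hy, h1, h0]
      rw [this]; exact isOpen_empty
  have hmem : f ∈ {f : X → R | IsLocallyConstant f ∧ IsCompact (support f) ∧ support f ⊆ V} :=
    ⟨hlc, by rw [hsupp]; exact hBc, by rw [hsupp]; exact hBV⟩
  have := hsub hmem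
  have hBV' : B ⊆ V' := by rw [← hsupp]; exact this.2.2
  exact hBV' hxB

/-- Let `X` be a Hausdorff space whose topology has a basis of compact open sets and `R`
a nontrivial commutative unital ring. If two open subsets `V, V' ⊆ X` determine the same
set `{f ∈ C_R(X) : supp f ⊆ V}` of locally constant compactly supported functions, then
`V = V'`. -/
theorem stmt18 (X : Type*) [TopologicalSpace X] [T2Space X]
    (hbasis : ∀ (x : X) (O : Set X), IsOpen O → x ∈ O →
      ∃ B : Set X, IsCompact B ∧ IsOpen B ∧ x ∈ B ∧ B ⊆ O)
    (R : Type*) [CommRing R] [Nontrivial R]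
    (V V' : Set X) (hV : IsOpen V) (hV' : IsOpen V')
    (heq : {f : X → R | IsLocallyConstant f ∧ IsCompact (support f) ∧ support f ⊆ V} =
        {f : X → R | IsLocallyConstant f ∧ IsCompact (support f) ∧ support f ⊆ V'}) :
    V = V' := by
  exact Set.Subset.antisymm (aux18 hbasis hV heq.le) (aux18 hbasis hV' heq.ge)
end
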